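/- In a fuzzy cycle, all β-strong edges have equal weight. -/

import Mathlib

open Finset

/-- A fuzzy graph on vertex type `V`. -/
structure FuzzyGraph (V : Type*) where
  ρ : V → ℝ
  υ : V → V → ℝ
  ρ_nonneg : ∀ a, 0 ≤ ρ a
  ρ_le_one : ∀ a, ρ a ≤ 1
  υ_nonneg : ∀ a b, 0 ≤ υ a b
  symm : ∀ a b, υ a b = υ b a
  υ_le : ∀ a b, υ a b ≤ min (ρ a) (ρ b)
  loopless : ∀ a, υ a a = 0

namespace FuzzyGraph

variable {V : Type*} [Fintype V] [DecidableEq V]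

/-- Strength of a path given by its list of successive vertices:
the minimum of the weights of its edges. -/
def pathStrength (X : FuzzyGraph V) : List V → ℝ
  | [] => 0
  | [_] => 0
  | [a, b] => X.υ a b
  | a :: b :: c :: l => min (X.υ a b) (X.pathStrength (b :: c :: l))

/-- `l` is a path from `a` to `b` : distinct vertices joined by positive-weight edges. -/
def IsPath (X : FuzzyGraph V) (a b : V) (l : List V) : Prop :=
  l.Nodup ∧ l.head? = some a ∧ l.getLast? = some b ∧ 2 ≤ l.length ∧
    l.Chain' (fun x y => 0 < X.υ x y)

/-- Strength of connectedness between two vertices: maximum strength of a path. -/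
noncomputable def conn (X : FuzzyGraph V) (a b : V) : ℝ :=
  sSup {s | ∃ l : List V, X.IsPath a b l ∧ s = X.pathStrength l}

/-- Delete the edge `ab` (set its weight to `0`). -/
def deleteEdge (X : FuzzyGraph V) (a b : V) : FuzzyGraph V where
  ρ := X.ρ
  υ x y := if (x = a ∧ y = b) ∨ (x = b ∧ y = a) then 0 else X.υ x y
  ρ_nonneg := X.ρ_nonneg
  ρ_le_one := X.ρ_le_one
  υ_nonneg := by
    intro x y; try dsimp only
    split_ifs
    · exact le_rfl
    · exact X.υ_nonneg x y
  symm := by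
    intro x y; try dsimp only
    by_cases h : (x = a ∧ y = b) ∨ (x = b ∧ y = a)
    · rw [if_pos h, if_pos (by tauto)]
    · rw [if_neg h, if_neg (by tauto), X.symm]
  υ_le := by
    intro x y; try dsimp only
    split_ifs
    · exact le_min (X.ρ_nonneg x) (X.ρ_nonneg y)
    · exact X.υ_le x y
  loopless := by
    intro x; try dsimp only
    split_ifs
    · rfl
    · exact X.loopless x

/-- `ab` is a strong edge (α- or β-strong). -/
def StrongEdge (X : FuzzyGraph V) (a b : V) : Prop :=
  0 < X.υ a b ∧ (X.deleteEdge a b).conn a b ≤ X.υ a b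

/-- `ab` is an α-strong edge. -/
def AlphaStrong (X : FuzzyGraph V) (a b : V) : Prop :=
  0 < X.υ a b ∧ (X.deleteEdge a b).conn a b < X.υ a b

/-- `ab` is a β-strong edge. -/
def BetaStrong (X : FuzzyGraph V) (a b : V) : Prop :=
  0 < X.υ a b ∧ X.υ a b = (X.deleteEdge a b).conn a b

/-- `ab` is a δ-edge. -/
def DeltaEdge (X : FuzzyGraph V) (a b : V) : Prop :=
  0 < X.υ a b ∧ X.υ a b < (X.deleteEdge a b).conn a b

/-- The minimum weight of a strong edge incident at `a`. -/
noncomputable def minInc (X : FuzzyGraph V) (a : V) : ℝ :=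
  sInf {w | ∃ b, X.StrongEdge a b ∧ w = X.υ a b}

/-- The weight of a set of vertices. -/
noncomputable def weight (X : FuzzyGraph V) (S : Finset V) : ℝ :=
  ∑ a ∈ S, X.minInc a

/-- `D` is a strong dominating set. -/
def IsSDS (X : FuzzyGraph V) (D : Finset V) : Prop :=
  ∀ v, v ∉ D → ∃ a ∈ D, X.StrongEdge a v

/-- `D` is a minimal strong dominating set. -/
def IsMinimalSDS (X : FuzzyGraph V) (D : Finset V) : Prop :=
  X.IsSDS D ∧ ∀ a ∈ D, ¬ X.IsSDS (D.erase a)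

/-- `D` is a minimum (least weight) strong dominating set. -/
def IsMinimumSDS (X : FuzzyGraph V) (D : Finset V) : Prop :=
  X.IsSDS D ∧ ∀ D' : Finset V, X.IsSDS D' → X.weight D ≤ X.weight D'

/-- The strong domination degree of a vertex. -/
noncomputable def sd (X : FuzzyGraph V) (u : V) : ℝ :=
  sInf {w | ∃ D : Finset V, X.IsMinimalSDS D ∧ u ∈ D ∧ w = X.weight D}

/-- The strong domination number. -/
noncomputable def gammaS (X : FuzzyGraph V) : ℝ :=
  sInf {w | ∃ D : Finset V, X.IsSDS D ∧ w = X.weight D}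

/-- The upper strong domination number. -/
noncomputable def GammaS (X : FuzzyGraph V) : ℝ :=
  sSup {w | ∃ D : Finset V, X.IsMinimalSDS D ∧ w = X.weight D}

/-- The strong domination index. -/
noncomputable def SDI (X : FuzzyGraph V) : ℝ := ∑ u : V, X.sd u

/-- `X` is connected. -/
def Connected (X : FuzzyGraph V) : Prop := ∀ a b : V, a ≠ b → ∃ l, X.IsPath a b l

/-- `X` is a strong fuzzy graph: every edge is strong. -/
def IsStrongFG (X : FuzzyGraph V) : Prop := ∀ a b, 0 < X.υ a b → X.StrongEdge a b

/-- Underlying (support) simple graph. -/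
def support (X : FuzzyGraph V) : SimpleGraph V where
  Adj a b := 0 < X.υ a b
  symm := by
    constructor; intro a b (h : 0 < X.υ a b); show 0 < X.υ b a; rw [X.symm]; exact h
  loopless := by
    constructor; intro a (h : 0 < X.υ a a); rw [X.loopless] at h; exact lt_irrefl 0 h

/-- `X` is a fuzzy tree. -/
def IsFuzzyTree (X : FuzzyGraph V) : Prop :=
  ∃ F : FuzzyGraph V, F.ρ = X.ρ ∧ (∀ a b, F.υ a b = X.υ a b ∨ F.υ a b = 0) ∧
    F.support.IsTree ∧ ∀ a b, 0 < X.υ a b → F.υ a b = 0 → X.υ a b < F.conn a b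

/-- The size of a fuzzy graph: the sum of all edge weights. -/
noncomputable def size (X : FuzzyGraph V) : ℝ := (∑ a : V, ∑ b : V, X.υ a b) / 2

/-- The underlying graph of `X` is a cycle. -/
def IsCycleGraph (X : FuzzyGraph V) : Prop :=
  ∃ n : ℕ, 3 ≤ n ∧ ∃ f : ZMod n ≃ V,
    ∀ x y : V, 0 < X.υ x y ↔ ∃ i : ZMod n, (x = f i ∧ y = f (i + 1)) ∨ (x = f (i + 1) ∧ y = f i)

/-- `X` is a fuzzy cycle: a cycle with at least two edges of minimum weight. -/
def IsFuzzyCycle (X : FuzzyGraph V) : Prop :=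
  X.IsCycleGraph ∧ ∃ a b c d : V, 0 < X.υ a b ∧ 0 < X.υ c d ∧
    Sym2.mk (a, b) ≠ Sym2.mk (c, d) ∧ X.υ a b = X.υ c d ∧
    ∀ x y, 0 < X.υ x y → X.υ a b ≤ X.υ x y

/-- A set of pairwise fuzzy independent vertices. -/
def IsFuzzyIndep (X : FuzzyGraph V) (S : Finset V) : Prop :=
  ∀ a ∈ S, ∀ b ∈ S, a ≠ b → ¬ X.StrongEdge a b

/-- The strong independent domination number. -/
noncomputable def iS (X : FuzzyGraph V) : ℝ :=
  sInf {w | ∃ D : Finset V, X.IsSDS D ∧ X.IsFuzzyIndep D ∧ w = X.weight D}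

/-- The strong independence number. -/
noncomputable def betaS (X : FuzzyGraph V) : ℝ :=
  sSup {w | ∃ S : Finset V, X.IsFuzzyIndep S ∧ w = X.weight S}

/-- Closed strong neighborhood. -/
def closedNbhd (X : FuzzyGraph V) (a : V) : Set V := insert a {b | X.StrongEdge a b}

/-- Open strong neighborhood. -/
def openNbhd (X : FuzzyGraph V) (a : V) : Set V := {b | X.StrongEdge a b}

/-- Private neighborhood of `a` with respect to `S`. -/
def privNbhd (X : FuzzyGraph V) (a : V) (S : Finset V) : Set V :=
  X.closedNbhd a \ ⋃ b ∈ S.erase a, X.closedNbhd b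

/-- `S` is a fuzzy irredundant set. -/
def IsIrredundant (X : FuzzyGraph V) (S : Finset V) : Prop :=
  ∀ a ∈ S, (X.privNbhd a S).Nonempty

/-- `S` is a maximal fuzzy irredundant set. -/
def IsMaximalIrredundant (X : FuzzyGraph V) (S : Finset V) : Prop :=
  X.IsIrredundant S ∧ ∀ v ∉ S, ¬ X.IsIrredundant (insert v S)

/-- The strong irredundance number. -/
noncomputable def irS (X : FuzzyGraph V) : ℝ :=
  sInf {w | ∃ S : Finset V, X.IsMaximalIrredundant S ∧ w = X.weight S}

end FuzzyGraph

/-!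
Label the cycle by `f : ZMod n ≃ V` and let `ab` be the edge `f i, f (i + 1)`. Every edge other
than `ab` joins two vertices whose backward distances `(i - f⁻¹ v).val` from `a` differ by
exactly one, while `a` and `b` lie at distances `0` and `n - 1`. Hence a path from `a` to `b`
avoiding `ab` climbs through every level and traverses every other edge, so its strength is at
most the weight of each of them. If `ab` is β-strong, `υ(ab)` is the supremum of these
strengths, hence at most the weight of every other edge; for two β-strong edges this gives both
inequalities.
-/

theorem List.exists_eq_append_cons_cons_of_head?_of_getLast? {α : Type*} (P : α → Prop) :
    ∀ {l : List α} {a b : α}, l.head? = some a → l.getLast? = some b → P a → ¬ P b →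
      ∃ l₁ x y l₂, l = l₁ ++ x :: y :: l₂ ∧ P x ∧ ¬ P y
  | [], _, _, ha, _, _, _ => by simp at ha
  | [x], a, b, ha, hb, hPa, hPb => by simp_all
  | x :: y :: l, a, b, ha, hb, hPa, hPb => by
    obtain rfl : x = a := by simpa using ha
    by_cases hPy : P y
    · obtain ⟨l₁, u, v, l₂, hl, hu, hv⟩ :=
        List.exists_eq_append_cons_cons_of_head?_of_getLast? P rfl
          (by rwa [List.getLast?_cons_cons] at hb) hPy hPb
      exact ⟨x :: l₁, u, v, l₂, by rw [hl, List.cons_append], hu, hv⟩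
    · exact ⟨[], x, y, l, rfl, hPa, hPy⟩

theorem ZMod.val_add_one_of_add_one_ne_zero {n : ℕ} [NeZero n] {z : ZMod n} (h : z + 1 ≠ 0) :
    (z + 1).val = z.val + 1 := by
  obtain ⟨m, rfl⟩ : ∃ m, n = m + 1 := Nat.exists_eq_succ_of_ne_zero (NeZero.ne n)
  refine Fin.val_add_one_of_lt (lt_of_le_of_ne (Fin.le_last z) fun hz => h ?_)
  rw [hz]
  exact Fin.last_add_one m

theorem ZMod.val_le_val_neg_one {n : ℕ} [NeZero n] (z : ZMod n) :
    z.val ≤ (-1 : ZMod n).val := by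
  obtain ⟨m, rfl⟩ : ∃ m, n = m + 1 := Nat.exists_eq_succ_of_ne_zero (NeZero.ne n)
  rw [ZMod.val_neg_one]
  exact Nat.le_of_lt_succ (ZMod.val_lt z)

namespace FuzzyGraph

variable {V : Type*}

theorem pathStrength_cons_cons (X : FuzzyGraph V) (x y : V) {l : List V} (hl : l ≠ []) :
    X.pathStrength (x :: y :: l) = min (X.υ x y) (X.pathStrength (y :: l)) := by
  obtain ⟨z, l, rfl⟩ := List.exists_cons_of_ne_nil hl
  rfl

theorem pathStrength_cons_cons_le (X : FuzzyGraph V) (x y : V) (l : List V) :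
    X.pathStrength (x :: y :: l) ≤ X.υ x y := by
  cases l with
  | nil => exact le_rfl
  | cons _ _ => exact min_le_left _ _

theorem pathStrength_append_cons_cons_le (X : FuzzyGraph V) (x y : V) (l₂ : List V) :
    ∀ l₁ : List V, X.pathStrength (l₁ ++ x :: y :: l₂) ≤ X.υ x y
  | [] => X.pathStrength_cons_cons_le x y l₂
  | [z] => (min_le_right _ _).trans (X.pathStrength_cons_cons_le x y l₂)
  | z :: w :: l₁ => by
    rw [List.cons_append, List.cons_append, pathStrength_cons_cons _ _ _ (by simp)]
    exact (min_le_right _ _).trans (X.pathStrength_append_cons_cons_le x y l₂ (w :: l₁))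

def IsCycleLabeling (X : FuzzyGraph V) {n : ℕ} (f : ZMod n ≃ V) : Prop :=
  ∀ x y : V, 0 < X.υ x y ↔
    ∃ i : ZMod n, (x = f i ∧ y = f (i + 1)) ∨ (x = f (i + 1) ∧ y = f i)

def backDist {n : ℕ} (f : ZMod n ≃ V) (i : ZMod n) (v : V) : ℕ := (i - f.symm v).val

theorem backDist_self {n : ℕ} (f : ZMod n ≃ V) (i : ZMod n) : backDist f i (f i) = 0 := by
  simp [backDist]

section backDist

variable {n : ℕ} [NeZero n] (f : ZMod n ≃ V) (i : ZMod n)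

theorem backDist_injective : Function.Injective (backDist f i) := fun _ _ h =>
  f.symm.injective (sub_right_injective (ZMod.val_injective n h))

theorem backDist_le_backDist_apply_add_one (v : V) :
    backDist f i v ≤ backDist f i (f (i + 1)) := by
  simpa [backDist] using ZMod.val_le_val_neg_one (i - f.symm v)

theorem backDist_eq_backDist_add_one {j : ZMod n} (hj : j ≠ i) :
    backDist f i (f j) = backDist f i (f (j + 1)) + 1 := by
  have hsub : i - (j + 1) + 1 = i - j := by ring
  simp only [backDist, Equiv.symm_apply_apply]
  rw [← hsub, ZMod.val_add_one_of_add_one_ne_zero (by rw [hsub]; exact sub_ne_zero.2 hj.symm)]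

end backDist

theorem IsCycleLabeling.reflect {X : FuzzyGraph V} {n : ℕ} {f : ZMod n ≃ V}
    (hf : X.IsCycleLabeling f) : X.IsCycleLabeling ((Equiv.neg (ZMod n)).trans f) := by
  intro x y
  simp only [hf x y, Equiv.trans_apply, Equiv.neg_apply]
  constructor
  · rintro ⟨i, h⟩
    refine ⟨-i - 1, ?_⟩
    rw [show -(-i - 1) = i + 1 by ring, show -(-i - 1 + 1) = i by ring]
    tauto
  · rintro ⟨i, h⟩
    refine ⟨-i - 1, ?_⟩
    rw [show -i - 1 + 1 = -i by ring, show -i - 1 = -(i + 1) by ring]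
    tauto

section DecidableEq

variable [DecidableEq V]

theorem deleteEdge_υ (X : FuzzyGraph V) (a b x y : V) :
    (X.deleteEdge a b).υ x y = if (x = a ∧ y = b) ∨ (x = b ∧ y = a) then 0 else X.υ x y :=
  rfl

theorem deleteEdge_υ_le (X : FuzzyGraph V) (a b x y : V) :
    (X.deleteEdge a b).υ x y ≤ X.υ x y := by
  rw [deleteEdge_υ]
  split_ifs
  exacts [X.υ_nonneg x y, le_rfl]

theorem deleteEdge_υ_pos {X : FuzzyGraph V} {a b x y : V} (h : 0 < (X.deleteEdge a b).υ x y) :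
    0 < X.υ x y ∧ ¬((x = a ∧ y = b) ∨ (x = b ∧ y = a)) := by
  rw [deleteEdge_υ] at h
  split_ifs at h with hxy
  exacts [absurd h (lt_irrefl 0), ⟨h, hxy⟩]

namespace IsCycleLabeling

variable {X : FuzzyGraph V} {n : ℕ} {f : ZMod n ≃ V}

theorem backDist_adj_of_deleteEdge [NeZero n] (hf : X.IsCycleLabeling f) {i : ZMod n} {x y : V}
    (hxy : 0 < (X.deleteEdge (f i) (f (i + 1))).υ x y) :
    backDist f i y = backDist f i x + 1 ∨ backDist f i x = backDist f i y + 1 := by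
  obtain ⟨hpos, hne⟩ := deleteEdge_υ_pos hxy
  obtain ⟨j, ⟨rfl, rfl⟩ | ⟨rfl, rfl⟩⟩ := (hf x y).1 hpos
  · refine Or.inr (backDist_eq_backDist_add_one f i fun hji => hne (Or.inl ?_))
    subst hji; exact ⟨rfl, rfl⟩
  · refine Or.inl (backDist_eq_backDist_add_one f i fun hji => hne (Or.inr ?_))
    subst hji; exact ⟨rfl, rfl⟩

theorem exists_eq_append_of_isChain_deleteEdge [NeZero n] (hf : X.IsCycleLabeling f)
    {i s : ZMod n} (hs : s ≠ i) {l : List V} (hhead : l.head? = some (f i))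
    (hlast : l.getLast? = some (f (i + 1)))
    (hchain : l.IsChain fun x y => 0 < (X.deleteEdge (f i) (f (i + 1))).υ x y) :
    ∃ l₁ l₂, l = l₁ ++ f (s + 1) :: f s :: l₂ := by
  have hstep := backDist_eq_backDist_add_one f i hs
  obtain ⟨l₁, x, y, l₂, rfl, hx, hy⟩ :=
    List.exists_eq_append_cons_cons_of_head?_of_getLast?
      (fun v => backDist f i v < backDist f i (f s)) hhead hlast (by simp [backDist_self, hstep])
      (backDist_le_backDist_apply_add_one f i _).not_gt
  have hxy :=
    hf.backDist_adj_of_deleteEdge (List.isChain_iff_forall_rel_of_append_cons_cons.1 hchain rfl)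
  obtain rfl : x = f (s + 1) := backDist_injective f i (by omega)
  obtain rfl : y = f s := backDist_injective f i (by omega)
  exact ⟨l₁, l₂, rfl⟩

theorem υ_le_of_betaStrong_consecutive [NeZero n] (hf : X.IsCycleLabeling f) {i : ZMod n}
    (hβ : X.BetaStrong (f i) (f (i + 1))) {p q : V} (hpq : 0 < X.υ p q)
    (hne : s(p, q) ≠ s(f i, f (i + 1))) : X.υ (f i) (f (i + 1)) ≤ X.υ p q := by
  obtain ⟨s, hs⟩ := (hf p q).1 hpq
  have hsi : s ≠ i := by
    rintro rfl
    rcases hs with ⟨rfl, rfl⟩ | ⟨rfl, rfl⟩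
    exacts [hne rfl, hne Sym2.eq_swap]
  have hυ : X.υ p q = X.υ (f (s + 1)) (f s) := by
    rcases hs with ⟨rfl, rfl⟩ | ⟨rfl, rfl⟩
    exacts [X.symm _ _, rfl]
  rw [hυ, hβ.2]
  refine Real.sSup_le ?_ (X.υ_nonneg _ _)
  rintro _ ⟨l, ⟨-, hhead, hlast, -, hchain⟩, rfl⟩
  obtain ⟨l₁, l₂, rfl⟩ := hf.exists_eq_append_of_isChain_deleteEdge hsi hhead hlast hchain
  exact (pathStrength_append_cons_cons_le _ _ _ _ _).trans (deleteEdge_υ_le _ _ _ _ _)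

theorem υ_le_of_betaStrong [NeZero n] (hf : X.IsCycleLabeling f) {a b p q : V}
    (hab : X.BetaStrong a b) (hpq : 0 < X.υ p q) (hne : s(p, q) ≠ s(a, b)) :
    X.υ a b ≤ X.υ p q := by
  obtain ⟨i, ⟨rfl, rfl⟩ | ⟨rfl, rfl⟩⟩ := (hf a b).1 hab.1
  · exact hf.υ_le_of_betaStrong_consecutive hab hpq hne
  · set g := (Equiv.neg (ZMod n)).trans f
    have hb : f (i + 1) = g (-i - 1) := congrArg f (by rw [Equiv.neg_apply]; ring)
    have ha : f i = g (-i - 1 + 1) := congrArg f (by rw [Equiv.neg_apply]; ring)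
    rw [hb, ha] at hab hne ⊢
    exact hf.reflect.υ_le_of_betaStrong_consecutive hab hpq hne

end IsCycleLabeling

end DecidableEq

end FuzzyGraph

theorem FuzzyGraph.betaStrong_weight_eq_general {V : Type*} [DecidableEq V]
    (X : FuzzyGraph V) (hX : X.IsFuzzyCycle) {a b c d : V}
    (hab : X.BetaStrong a b) (hcd : X.BetaStrong c d) :
    X.υ a b = X.υ c d := by
  obtain ⟨⟨n, hn, f, hf : X.IsCycleLabeling f⟩, -⟩ := hX
  have : NeZero n := ⟨by omega⟩
  by_cases h : s(a, b) = s(c, d)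
  · rcases Sym2.eq_iff.mp h with ⟨rfl, rfl⟩ | ⟨rfl, rfl⟩
    exacts [rfl, X.symm _ _]
  · exact le_antisymm (hf.υ_le_of_betaStrong hab hcd.1 (Ne.symm h))
      (hf.υ_le_of_betaStrong hcd hab.1 h)

/-- In a fuzzy cycle, all β-strong edges have equal weight. -/
theorem FuzzyGraph.betaStrong_weight_eq {V : Type*} [Fintype V] [DecidableEq V]
    (X : FuzzyGraph V) (hX : X.IsFuzzyCycle) {a b c d : V}
    (hab : X.BetaStrong a b) (hcd : X.BetaStrong c d) :
    X.υ a b = X.υ c d :=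
  FuzzyGraph.betaStrong_weight_eq_general X hX hab hcd
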